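/- (Example 7.5, the snakeboard: the one-form produced by the Chaplygin Hamilton–Jacobi method after two-stage reduction solves the nonholonomic Hamilton–Jacobi equation.) Let m, r, J₀, J₁ > 0 with m r² > J₀, and let E, γ_φ⁰, μ_ψ ∈ ℝ with E − (γ_φ⁰)²/(4J₁) − μ_ψ²/(2J₀) ≥ 0. Set C := √(E − (γ_φ⁰)²/(4J₁) − μ_ψ²/(2J₀)) and g(φ) := √((m r² − J₀ sin²φ)/2). Let U := {(θ,x,y,φ,ψ) ∈ ℝ⁵ : 0 < φ < π}. Define the one-form γ on U by γ(θ,x,y,φ,ψ) = (μ_ψ + (m r² − J₀)·C·sin φ / g(φ)) dθ − (m r C·cot φ·sin φ / g(φ))·(cos θ dx + sin θ dy) + γ_φ⁰ dφ + μ_ψ dψ. Then: (i) H(q, γ(q)) = E for all q ∈ U; and (ii) dγ_q(u, v) = 0 for all q ∈ U and all u, v ∈ D_q. -/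

import Mathlib

noncomputable section

open Matrix

/-- Hamiltonian of the snakeboard, coordinates `q = (θ, x, y, φ, ψ)`
(indices 0,1,2,3,4) and momenta `p = (p_θ, p_x, p_y, p_φ, p_ψ)`. -/
def snakeH (m r J0 J1 : ℝ) (p : Fin 5 → ℝ) : ℝ :=
  ((p 1) ^ 2 + (p 2) ^ 2) / (2 * m) + (p 0 - p 4) ^ 2 / (2 * (m * r ^ 2 - J0))
    + (p 3) ^ 2 / (4 * J1) + (p 4) ^ 2 / (2 * J0)

/-- Constraint distribution of the snakeboard, spanned by `∂_φ`, `∂_ψ` and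
`∂_θ − r cot φ cos θ ∂_x − r cot φ sin θ ∂_y`. -/
def snakeD (r : ℝ) (q : Fin 5 → ℝ) : Submodule ℝ (Fin 5 → ℝ) :=
  Submodule.span ℝ
    ({![0, 0, 0, 1, 0], ![0, 0, 0, 0, 1],
      ![1, -(r * (Real.cos (q 3) / Real.sin (q 3)) * Real.cos (q 0)),
        -(r * (Real.cos (q 3) / Real.sin (q 3)) * Real.sin (q 0)), 0, 0]} : Set (Fin 5 → ℝ))

/-- `C := √(E − (γ_φ⁰)²/(4J₁) − μ_ψ²/(2J₀))`. -/
def snakeC (J0 J1 E γφ0 μψ : ℝ) : ℝ :=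
  Real.sqrt (E - γφ0 ^ 2 / (4 * J1) - μψ ^ 2 / (2 * J0))

/-- `g(φ) := √((m r² − J₀ sin²φ)/2)`. -/
def snakeg (m r J0 : ℝ) (φ : ℝ) : ℝ :=
  Real.sqrt ((m * r ^ 2 - J0 * Real.sin φ ^ 2) / 2)

/-- The one-form produced by the Chaplygin Hamilton–Jacobi method after
two-stage reduction. -/
def snakeGamma (m r J0 J1 E γφ0 μψ : ℝ) (q : Fin 5 → ℝ) : Fin 5 → ℝ :=
  ![μψ + (m * r ^ 2 - J0) * snakeC J0 J1 E γφ0 μψ * Real.sin (q 3) / snakeg m r J0 (q 3),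
    -(m * r * snakeC J0 J1 E γφ0 μψ * (Real.cos (q 3) / Real.sin (q 3)) * Real.sin (q 3)
        / snakeg m r J0 (q 3)) * Real.cos (q 0),
    -(m * r * snakeC J0 J1 E γφ0 μψ * (Real.cos (q 3) / Real.sin (q 3)) * Real.sin (q 3)
        / snakeg m r J0 (q 3)) * Real.sin (q 0),
    γφ0, μψ]

/-- The domain `U := {q : 0 < φ < π}`. -/
def snakeU : Set (Fin 5 → ℝ) := {q | 0 < q 3 ∧ q 3 < Real.pi}

/-!
On `snakeU` we have `cot φ · sin φ = cos φ`, so `γ = (μψ + B φ) dθ - A φ (cos θ dx + sin θ dy)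
+ γφ0 dφ + μψ dψ` with `A = m r C cos φ / g` and `B = (m r² - J0) C sin φ / g`.
Hence `p_x² + p_y² = A²` and `p_θ - p_ψ = B`, and (i) follows from
`A² / (2m) + B² / (2(m r² - J0)) = C²`, i.e. `m r² cos² φ + (m r² - J0) sin² φ = 2 g²`.
For (ii), `dγ_q` is bilinear and alternating, so it suffices to evaluate it on the generators of
`D_q`; the only pairing that is not identically zero is `dγ(∂_φ, X₃) = B' + r cot φ · A'`,
which vanishes because `(g²)' = -J0 sin φ cos φ`.
-/

open Real Set

section SpanLemma

variable {R ι : Type*} [CommRing R] [Fintype ι]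

theorem dotProduct_sub_dotProduct_eq_zero_of_mem_span (L : (ι → R) →ₗ[R] ι → R)
    {s : Set (ι → R)} (h : ∀ a ∈ s, ∀ b ∈ s, L a ⬝ᵥ b - L b ⬝ᵥ a = 0) {u v : ι → R}
    (hu : u ∈ Submodule.span R s) (hv : v ∈ Submodule.span R s) :
    L u ⬝ᵥ v - L v ⬝ᵥ u = 0 := by
  induction hu, hv using Submodule.span_induction₂ with
  | mem_mem a b ha hb => exact h a ha b hb
  | zero_left => simp
  | zero_right => simp
  | add_left x y z _ _ _ hx hy =>
    simp only [map_add, add_dotProduct, dotProduct_add]; linear_combination hx + hy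
  | add_right x y z _ _ _ hy hz =>
    simp only [map_add, add_dotProduct, dotProduct_add]; linear_combination hy + hz
  | smul_left c x y _ _ hxy =>
    simp only [map_smul, smul_dotProduct, dotProduct_smul, smul_eq_mul]
    linear_combination c * hxy
  | smul_right c x y _ _ hxy =>
    simp only [map_smul, smul_dotProduct, dotProduct_smul, smul_eq_mul]
    linear_combination c * hxy

end SpanLemma

def snakeForm (A B : ℝ → ℝ) (a b : ℝ) (q : Fin 5 → ℝ) : Fin 5 → ℝ :=
  ![b + B (q 3), -A (q 3) * cos (q 0), -A (q 3) * sin (q 0), a, b]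

section SnakeForm

local notation "dθ" => (ContinuousLinearMap.proj 0 : (Fin 5 → ℝ) →L[ℝ] ℝ)
local notation "dφ" => (ContinuousLinearMap.proj 3 : (Fin 5 → ℝ) →L[ℝ] ℝ)

variable {m r J0 J1 : ℝ} {A B : ℝ → ℝ} {A' B' a b : ℝ} {q : Fin 5 → ℝ}

theorem snakeH_snakeForm :
    snakeH m r J0 J1 (snakeForm A B a b q) =
      A (q 3) ^ 2 / (2 * m) + B (q 3) ^ 2 / (2 * (m * r ^ 2 - J0))
        + a ^ 2 / (4 * J1) + b ^ 2 / (2 * J0) := by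
  have hθ := sin_sq_add_cos_sq (q 0)
  simp only [snakeH, snakeForm, Matrix.cons_val_zero, Matrix.cons_val_one, Matrix.cons_val_two,
    Matrix.cons_val_three, Matrix.cons_val_four, Matrix.head_cons, Matrix.tail_cons,
    add_sub_cancel_left]
  rw [show (-A (q 3) * cos (q 0)) ^ 2 + (-A (q 3) * sin (q 0)) ^ 2 = A (q 3) ^ 2 by
    linear_combination A (q 3) ^ 2 * hθ]

theorem hasFDerivAt_snakeForm (hA : HasDerivAt A A' (q 3)) (hB : HasDerivAt B B' (q 3)) :
    HasFDerivAt (snakeForm A B a b)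
      (ContinuousLinearMap.pi ![B' • dφ,
        (A (q 3) * sin (q 0)) • dθ - (A' * cos (q 0)) • dφ,
        -(A (q 3) * cos (q 0)) • dθ - (A' * sin (q 0)) • dφ, 0, 0]) q := by
  have hθ : HasFDerivAt (fun x : Fin 5 → ℝ => x 0) dθ q := hasFDerivAt_apply 0 q
  have hφ : HasFDerivAt (fun x : Fin 5 → ℝ => x 3) dφ q := hasFDerivAt_apply 3 q
  have hnegA := (hA.comp_hasFDerivAt q hφ).neg
  refine hasFDerivAt_pi'.2 fun i => ?_
  fin_cases i
  · exact (hB.comp_hasFDerivAt q hφ).const_add b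
  · refine (hnegA.mul ((hasDerivAt_cos _).comp_hasFDerivAt q hθ)).congr_fderiv ?_
    ext y
    simp only [Fin.isValue, Pi.neg_apply, Function.comp_apply, neg_smul, smul_neg, neg_neg,
      _root_.add_apply, _root_.smul_apply, ContinuousLinearMap.proj_apply, smul_eq_mul,
      _root_.neg_apply, Fin.mk_one, ContinuousLinearMap.proj_pi, Matrix.cons_val_one,
      Matrix.cons_val_zero, _root_.sub_apply]
    ring
  · refine (hnegA.mul ((hasDerivAt_sin _).comp_hasFDerivAt q hθ)).congr_fderiv ?_
    ext y
    simp only [Fin.isValue, Pi.neg_apply, Function.comp_apply, neg_smul, smul_neg,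
      _root_.add_apply, _root_.neg_apply, _root_.smul_apply, ContinuousLinearMap.proj_apply,
      smul_eq_mul, Fin.reduceFinMk, ContinuousLinearMap.proj_pi, Matrix.cons_val, _root_.sub_apply,
      neg_mul]
    ring
  · exact hasFDerivAt_const a q
  · exact hasFDerivAt_const b q

theorem fderiv_snakeForm_alt_eq_zero_of_mem_snakeD {u v : Fin 5 → ℝ} (hA : HasDerivAt A A' (q 3)) (hB : HasDerivAt B B' (q 3))
    (h : B' + r * (cos (q 3) / sin (q 3)) * A' = 0) (hu : u ∈ snakeD r q) (hv : v ∈ snakeD r q) :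
    fderiv ℝ (snakeForm A B a b) q u ⬝ᵥ v - fderiv ℝ (snakeForm A B a b) q v ⬝ᵥ u = 0 := by
  rw [(hasFDerivAt_snakeForm hA hB).fderiv]
  refine dotProduct_sub_dotProduct_eq_zero_of_mem_span _ (fun x hx y hy => ?_) hu hv
  have hθ := sin_sq_add_cos_sq (q 0)
  set c := r * (cos (q 3) / sin (q 3)) * A'
  simp only [mem_insert_iff, mem_singleton_iff] at hx hy
  rcases hx with rfl | rfl | rfl <;> rcases hy with rfl | rfl | rfl <;>
    simp only [dotProduct, Fin.sum_univ_five, ContinuousLinearMap.coe_pi, LinearMap.pi_apply,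
      ContinuousLinearMap.coe_coe, Matrix.cons_val, _root_.sub_apply, _root_.smul_apply,
      ContinuousLinearMap.proj_apply, smul_eq_mul, _root_.zero_apply] <;>
    first | ring1 | linear_combination h + c * hθ | linear_combination -h - c * hθ

end SnakeForm

def snakeA (m r J0 C φ : ℝ) : ℝ := m * r * C * cos φ / snakeg m r J0 φ

def snakeB (m r J0 C φ : ℝ) : ℝ := (m * r ^ 2 - J0) * C * sin φ / snakeg m r J0 φ

section Coefficients

variable {m r J0 : ℝ}

theorem snakeg_radicand_pos (hJ0 : 0 < J0) (hmr : J0 < m * r ^ 2) (φ : ℝ) :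
    0 < (m * r ^ 2 - J0 * sin φ ^ 2) / 2 := by
  nlinarith [sin_sq_le_one φ]

theorem snakeg_pos (hJ0 : 0 < J0) (hmr : J0 < m * r ^ 2) (φ : ℝ) : 0 < snakeg m r J0 φ :=
  sqrt_pos.2 (snakeg_radicand_pos hJ0 hmr φ)

theorem snakeg_sq (hJ0 : 0 < J0) (hmr : J0 < m * r ^ 2) (φ : ℝ) :
    snakeg m r J0 φ ^ 2 = (m * r ^ 2 - J0 * sin φ ^ 2) / 2 :=
  sq_sqrt (snakeg_radicand_pos hJ0 hmr φ).le

theorem hasDerivAt_snakeg (hJ0 : 0 < J0) (hmr : J0 < m * r ^ 2) (φ : ℝ) :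
    HasDerivAt (snakeg m r J0) (-(J0 * sin φ * cos φ) / (2 * snakeg m r J0 φ)) φ := by
  have h : HasDerivAt (fun ψ => (m * r ^ 2 - J0 * sin ψ ^ 2) / 2) (-(J0 * sin φ * cos φ)) φ := by
    refine ((((hasDerivAt_sin φ).fun_pow 2).const_mul J0).const_sub (m * r ^ 2)
      |>.div_const 2).congr_deriv ?_
    simp only [Nat.cast_ofNat, Nat.add_one_sub_one, pow_one]; ring
  exact h.sqrt (snakeg_radicand_pos hJ0 hmr φ).ne'

theorem snakeA_sq_div_add_snakeB_sq_div (hJ0 : 0 < J0) (hmr : J0 < m * r ^ 2) (C φ : ℝ) :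
    snakeA m r J0 C φ ^ 2 / (2 * m) + snakeB m r J0 C φ ^ 2 / (2 * (m * r ^ 2 - J0)) = C ^ 2 := by
  have hg := (snakeg_pos hJ0 hmr φ).ne'
  have hmr' : m * r ^ 2 - J0 ≠ 0 := by linarith
  have hg2 := snakeg_sq (m := m) (r := r) hJ0 hmr φ
  rw [snakeA, snakeB]
  field_simp
  linear_combination m * r ^ 2 * C ^ 2 * sin_sq_add_cos_sq φ - 2 * C ^ 2 * hg2

theorem exists_hasDerivAt_snakeA_snakeB (hJ0 : 0 < J0) (hmr : J0 < m * r ^ 2) (C : ℝ) {φ : ℝ}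
    (hφ : sin φ ≠ 0) :
    ∃ A' B', HasDerivAt (snakeA m r J0 C) A' φ ∧ HasDerivAt (snakeB m r J0 C) B' φ ∧
      B' + r * (cos φ / sin φ) * A' = 0 := by
  have hg := hasDerivAt_snakeg hJ0 hmr φ
  have hg0 := (snakeg_pos hJ0 hmr φ).ne'
  refine ⟨_, _, ((hasDerivAt_cos φ).const_mul (m * r * C)).div hg hg0,
    ((hasDerivAt_sin φ).const_mul ((m * r ^ 2 - J0) * C)).div hg hg0, ?_⟩
  field_simp
  linear_combination J0 * C * cos φ * (m * r ^ 2 * sin_sq_add_cos_sq φ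
    - 2 * snakeg_sq hJ0 hmr φ)

end Coefficients

theorem isOpen_snakeU : IsOpen snakeU :=
  (isOpen_lt continuous_const (continuous_apply 3)).inter
    (isOpen_lt (continuous_apply 3) continuous_const)

theorem sin_pos_of_mem_snakeU {q : Fin 5 → ℝ} (hq : q ∈ snakeU) : 0 < sin (q 3) :=
  sin_pos_of_pos_of_lt_pi hq.1 hq.2

theorem snakeGamma_eqOn_snakeForm (m r J0 J1 E γφ0 μψ : ℝ) :
    EqOn (snakeGamma m r J0 J1 E γφ0 μψ)
      (snakeForm (snakeA m r J0 (snakeC J0 J1 E γφ0 μψ)) (snakeB m r J0 (snakeC J0 J1 E γφ0 μψ))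
        γφ0 μψ) snakeU := by
  intro q hq
  have hcot : cos (q 3) / sin (q 3) * sin (q 3) = cos (q 3) :=
    div_mul_cancel₀ _ (sin_pos_of_mem_snakeU hq).ne'
  ext i
  fin_cases i <;> simp [snakeGamma, snakeForm, snakeA, snakeB, mul_assoc, hcot]

theorem statement18_general (m r J0 J1 E γφ0 μψ : ℝ)
    (hJ0 : 0 < J0)
    (hmr : J0 < m * r ^ 2)
    (hE : 0 ≤ E - γφ0 ^ 2 / (4 * J1) - μψ ^ 2 / (2 * J0)) :
    -- (i) the nonholonomic Hamilton–Jacobi equation on U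
    (∀ q ∈ snakeU, snakeH m r J0 J1 (snakeGamma m r J0 J1 E γφ0 μψ q) = E)
      -- (ii) dγ vanishes on the constraint distribution
      ∧ (∀ q ∈ snakeU, ∀ u ∈ snakeD r q, ∀ v ∈ snakeD r q,
          fderiv ℝ (snakeGamma m r J0 J1 E γφ0 μψ) q u ⬝ᵥ v
            - fderiv ℝ (snakeGamma m r J0 J1 E γφ0 μψ) q v ⬝ᵥ u = 0) := by
  have hγ := snakeGamma_eqOn_snakeForm m r J0 J1 E γφ0 μψ
  refine ⟨fun q hq => ?_, fun q hq u hu v hv => ?_⟩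
  · rw [hγ hq, snakeH_snakeForm, snakeA_sq_div_add_snakeB_sq_div hJ0 hmr, snakeC, sq_sqrt hE]
    ring
  · obtain ⟨A', B', hA, hB, h⟩ :=
      exists_hasDerivAt_snakeA_snakeB hJ0 hmr (snakeC J0 J1 E γφ0 μψ) (sin_pos_of_mem_snakeU hq).ne'
    rw [(hγ.eventuallyEq_of_mem (isOpen_snakeU.mem_nhds hq)).fderiv_eq]
    exact fderiv_snakeForm_alt_eq_zero_of_mem_snakeD hA hB h hu hv

theorem statement18 (m r J0 J1 E γφ0 μψ : ℝ)
    (hm : 0 < m) (hr : 0 < r) (hJ0 : 0 < J0) (hJ1 : 0 < J1)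
    (hmr : J0 < m * r ^ 2)
    (hE : 0 ≤ E - γφ0 ^ 2 / (4 * J1) - μψ ^ 2 / (2 * J0)) :
    -- (i) the nonholonomic Hamilton–Jacobi equation on U
    (∀ q ∈ snakeU, snakeH m r J0 J1 (snakeGamma m r J0 J1 E γφ0 μψ q) = E)
      -- (ii) dγ vanishes on the constraint distribution
      ∧ (∀ q ∈ snakeU, ∀ u ∈ snakeD r q, ∀ v ∈ snakeD r q,
          fderiv ℝ (snakeGamma m r J0 J1 E γφ0 μψ) q u ⬝ᵥ v
            - fderiv ℝ (snakeGamma m r J0 J1 E γφ0 μψ) q v ⬝ᵥ u = 0) :=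
  statement18_general m r J0 J1 E γφ0 μψ hJ0 hmr hE
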